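/- Let G be a graph and H a bipartite graph, each with a chosen edge, and let X be the graph obtained from the disjoint union of G and H by identifying the chosen edge of G with the chosen edge of H (identifying the endpoints pairwise and the edges). Then |X|(q) = |G|(q) + |H|(q) − 2/(1 + q) in ℚ(q). -/
import Mathlib


open scoped Classical in
/-- `q ^ d` for an extended natural number `d`, with the convention `q ^ ∞ = 0`. -/
noncomputable def qExp (d : ℕ∞) : RatFunc ℚ :=
  if d = ⊤ then 0 else RatFunc.X ^ d.toNat

/-- The matrix `Z_G(q)` whose `(x, y)` entry is `q ^ d(x, y)`. -/
noncomputable def magMatrix {V : Type*} [Fintype V] (G : SimpleGraph V) :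
    Matrix V V (RatFunc ℚ) :=
  Matrix.of fun x y => qExp (G.edist x y)

/-- The magnitude of a graph: the sum of all entries of `Z_G(q)⁻¹`. -/
noncomputable def magnitude {V : Type*} [Fintype V] [DecidableEq V] (G : SimpleGraph V) :
    RatFunc ℚ :=
  ∑ x, ∑ y, (magMatrix G)⁻¹ x y

/-- The weighting of a graph: `w_G x` is the `x`-th row sum of `Z_G(q)⁻¹`. -/
noncomputable def weighting {V : Type*} [Fintype V] [DecidableEq V] (G : SimpleGraph V)
    (x : V) : RatFunc ℚ :=
  ∑ y, (magMatrix G)⁻¹ x y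
/-- The graph obtained from the disjoint union of `G` and `H` by identifying the pair
`(gp, gm)` of vertices of `G` with the pair `(hp, hm)` of vertices of `H` (identifying
any resulting double edge between the points of identification). The vertices `Sum.inl gp`
and `Sum.inl gm` are the identified (gluing) vertices. -/
def twoPointGlue {V W : Type*} (G : SimpleGraph V) (gp gm : V)
    (H : SimpleGraph W) (hp hm : W) :
    SimpleGraph (V ⊕ {w : W // w ≠ hp ∧ w ≠ hm}) :=
  SimpleGraph.fromRel fun x y =>
    match x, y with
    | Sum.inl a, Sum.inl b => G.Adj a b ∨ (a = gp ∧ b = gm ∧ H.Adj hp hm)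
    | Sum.inl a, Sum.inr b => (a = gp ∧ H.Adj hp b.1) ∨ (a = gm ∧ H.Adj hm b.1)
    | Sum.inr a, Sum.inr b => H.Adj a.1 b.1
    | Sum.inr _, Sum.inl _ => False

lemma qExp_top : qExp ⊤ = 0 := by simp [qExp]

lemma qExp_coe (n : ℕ) : qExp n = RatFunc.X ^ n := by
  simp [qExp]

lemma qExp_zero : qExp 0 = 1 := by simpa using qExp_coe 0

lemma qExp_add (a b : ℕ∞) : qExp (a + b) = qExp a * qExp b := by
  cases a with
  | top => simp [qExp_top]
  | coe m =>
    cases b with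
    | top => simp [qExp_top]
    | coe n =>
      rw [← Nat.cast_add, qExp_coe, qExp_coe, qExp_coe, pow_add]

lemma qExp_one : qExp 1 = RatFunc.X := by
  have := qExp_coe 1
  simpa using this

lemma qExp_add_one (a : ℕ∞) : qExp (a + 1) = RatFunc.X * qExp a := by
  rw [qExp_add, qExp_one, mul_comm]

/-- The polynomial version of the magnitude matrix. -/
noncomputable def magMatrixPoly {V : Type*} [Fintype V] (G : SimpleGraph V) :
    Matrix V V (Polynomial ℚ) :=
  Matrix.of fun x y => if G.edist x y = ⊤ then 0 else Polynomial.X ^ (G.edist x y).toNat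

lemma magMatrix_eq_map {V : Type*} [Fintype V] (G : SimpleGraph V) :
    magMatrix G = (magMatrixPoly G).map (algebraMap (Polynomial ℚ) (RatFunc ℚ)) := by
  ext x y
  simp only [magMatrix, magMatrixPoly, Matrix.map_apply, Matrix.of_apply, qExp]
  split
  · simp
  · simp [RatFunc.algebraMap_eq_C, map_pow, RatFunc.algebraMap_X]

lemma magMatrixPoly_det_ne_zero {V : Type*} [Fintype V] [DecidableEq V] (G : SimpleGraph V) :
    (magMatrixPoly G).det ≠ 0 := by
  intro h
  have h0 : ((magMatrixPoly G).map (Polynomial.evalRingHom (0 : ℚ))).det = 0 := by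
    rw [← RingHom.mapMatrix_apply, ← RingHom.map_det, h, map_zero]
  have : (magMatrixPoly G).map (Polynomial.evalRingHom (0 : ℚ)) = 1 := by
    ext x y
    simp only [Matrix.map_apply, magMatrixPoly, Matrix.of_apply]
    by_cases hxy : x = y
    · subst hxy
      simp [SimpleGraph.edist_self, Matrix.one_apply_eq]
    · have hne : G.edist x y ≠ 0 := by
        simpa [SimpleGraph.edist_eq_zero_iff] using hxy
      split
      · simp [Matrix.one_apply_ne hxy]
      · rename_i htop
        have hnt : (G.edist x y).toNat ≠ 0 := by
          intro h0'
          rcases ENat.toNat_eq_zero.mp h0' with h' | h'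
          · exact hne h'
          · exact htop h'
        simp [map_pow, zero_pow hnt, Matrix.one_apply_ne hxy]
  rw [this, Matrix.det_one] at h0
  exact one_ne_zero h0

lemma magMatrix_det_ne_zero {V : Type*} [Fintype V] [DecidableEq V] (G : SimpleGraph V) :
    (magMatrix G).det ≠ 0 := by
  rw [magMatrix_eq_map, ← RingHom.mapMatrix_apply, ← RingHom.map_det]
  intro h
  exact magMatrixPoly_det_ne_zero G (RatFunc.algebraMap_injective ℚ (by simpa using h))

lemma magMatrix_isUnit {V : Type*} [Fintype V] [DecidableEq V] (G : SimpleGraph V) :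
    IsUnit (magMatrix G).det := (magMatrix_det_ne_zero G).isUnit

/-- The fundamental weighting identity. -/
lemma weighting_spec {V : Type*} [Fintype V] [DecidableEq V] (G : SimpleGraph V) (x : V) :
    ∑ y, qExp (G.edist x y) * weighting G y = 1 := by
  have hw : weighting G = (magMatrix G)⁻¹.mulVec (fun _ => 1) := by
    funext z
    simp [weighting, Matrix.mulVec, dotProduct]
  have h : (magMatrix G).mulVec (weighting G) = fun _ => 1 := by
    rw [hw, Matrix.mulVec_mulVec, Matrix.mul_nonsing_inv _ (magMatrix_isUnit G),
      Matrix.one_mulVec]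
  have h2 := congrFun h x
  simpa [Matrix.mulVec, dotProduct, magMatrix] using h2

lemma magnitude_eq_sum_weighting {V : Type*} [Fintype V] [DecidableEq V] (G : SimpleGraph V) :
    magnitude G = ∑ x, weighting G x := rfl

/-- Any vector satisfying the weighting identity sums to the magnitude. -/
lemma sum_eq_magnitude {V : Type*} [Fintype V] [DecidableEq V] (G : SimpleGraph V)
    (v : V → RatFunc ℚ) (hv : ∀ x, ∑ y, qExp (G.edist x y) * v y = 1) :
    ∑ x, v x = magnitude G := by
  have hv' : (magMatrix G).mulVec v = fun _ => 1 := by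
    funext x
    simpa [Matrix.mulVec, dotProduct, magMatrix] using hv x
  have : v = (magMatrix G)⁻¹.mulVec (fun _ => 1) := by
    rw [← hv', Matrix.mulVec_mulVec, Matrix.nonsing_inv_mul _ (magMatrix_isUnit G),
      Matrix.one_mulVec]
  rw [this, magnitude]
  simp [Matrix.mulVec, dotProduct]


lemma sum_subtype_compl {W : Type*} [Fintype W] [DecidableEq W] {M : Type*} [AddCommGroup M]
    (h₁ h₂ : W) (hne : h₁ ≠ h₂) (F : W → M) :
    ∑ b : {w : W // w ≠ h₁ ∧ w ≠ h₂}, F b.1 = (∑ w, F w) - F h₁ - F h₂ := by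
  classical
  have hsub : ∑ w ∈ Finset.univ.filter (fun w => w ≠ h₁ ∧ w ≠ h₂), F w
      = ∑ b : {w : W // w ≠ h₁ ∧ w ≠ h₂}, F b.1 :=
    Finset.sum_subtype _ (by simp) F
  have hsplit := Finset.sum_filter_add_sum_filter_not Finset.univ
    (fun w => w ≠ h₁ ∧ w ≠ h₂) F
  have hnotf : Finset.univ.filter (fun w => ¬(w ≠ h₁ ∧ w ≠ h₂)) = {h₁, h₂} := by
    ext w
    simp [not_and_or, or_comm]
    tauto
  rw [hnotf, Finset.sum_pair hne] at hsplit
  rw [← hsub]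
  have := hsplit
  rw [← this]
  abel

lemma one_add_X_ne_zero : (1 + RatFunc.X : RatFunc ℚ) ≠ 0 := by
  have : (1 + RatFunc.X : RatFunc ℚ)
      = algebraMap (Polynomial ℚ) (RatFunc ℚ) (1 + Polynomial.X) := by
    rw [map_add, map_one, RatFunc.algebraMap_X]
  rw [this]
  intro h
  have h2 : (1 + Polynomial.X : Polynomial ℚ) = 0 :=
    RatFunc.algebraMap_injective ℚ (by simpa using h)
  have := congrArg (Polynomial.eval 0) h2
  simp at this

lemma one_sub_X_ne_zero : (1 - RatFunc.X : RatFunc ℚ) ≠ 0 := by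
  have : (1 - RatFunc.X : RatFunc ℚ)
      = algebraMap (Polynomial ℚ) (RatFunc ℚ) (1 - Polynomial.X) := by
    rw [map_sub, map_one, RatFunc.algebraMap_X]
  rw [this]
  intro h
  have h2 : (1 - Polynomial.X : Polynomial ℚ) = 0 :=
    RatFunc.algebraMap_injective ℚ (by simpa using h)
  have := congrArg (Polynomial.eval 0) h2
  simp at this

lemma min_add_one_right {d1 d2 e : ℕ∞} (h : d2 ≤ d1 + 1) :
    min (d1 + (e + 1)) (d2 + e) = d2 + e :=
  min_eq_right (by calc d2 + e ≤ (d1 + 1) + e := by gcongr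
    _ = d1 + (e + 1) := by ring)

lemma min_add_one_left {d1 d2 e : ℕ∞} (h : d1 ≤ d2 + 1) :
    min (d1 + e) (d2 + (e + 1)) = d1 + e :=
  min_eq_left (by calc d1 + e ≤ (d2 + 1) + e := by gcongr
    _ = d2 + (e + 1) := by ring)


private lemma fin2_neq {a b d : Fin 2} (h : a ≠ b) : a = d ↔ ¬(b = d) := by
  revert a b d; decide

lemma walk_parity {W : Type*} {H : SimpleGraph W} (c : H.Coloring (Fin 2)) {x y : W}
    (p : H.Walk x y) : Even p.length ↔ c x = c y := by
  induction p with
  | nil => simp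
  | @cons u v w h p ih =>
    have hne : c u ≠ c v := c.valid h
    rw [SimpleGraph.Walk.length_cons, Nat.even_add_one, ih, fin2_neq hne]

lemma bip_dichotomy {W : Type*} {H : SimpleGraph W} (c : H.Coloring (Fin 2)) {h₁ h₂ : W}
    (hHadj : H.Adj h₁ h₂) (b : W) :
    H.edist h₁ b = H.edist h₂ b + 1 ∨ H.edist h₂ b = H.edist h₁ b + 1 := by
  have hH12 : H.edist h₁ h₂ = 1 := SimpleGraph.edist_eq_one_iff_adj.mpr hHadj
  rcases eq_or_ne (H.edist h₁ b) ⊤ with h1 | h1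
  · have h2 : H.edist h₂ b = ⊤ := by
      by_contra h2
      have h2' : H.Reachable h₂ b := SimpleGraph.reachable_of_edist_ne_top h2
      exact SimpleGraph.edist_ne_top_iff_reachable.mpr (hHadj.reachable.trans h2') h1
    left
    rw [h1, h2]
    simp
  · have h2 : H.edist h₂ b ≠ ⊤ := by
      rw [SimpleGraph.edist_ne_top_iff_reachable] at h1 ⊢
      exact hHadj.symm.reachable.trans h1
    obtain ⟨p1, hp1⟩ := SimpleGraph.exists_walk_of_edist_ne_top h1
    obtain ⟨p2, hp2⟩ := SimpleGraph.exists_walk_of_edist_ne_top h2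
    have par1 : Even p1.length ↔ c h₁ = c b := walk_parity c p1
    have par2 : Even p2.length ↔ c h₂ = c b := walk_parity c p2
    have hcc : c h₁ ≠ c h₂ := c.valid hHadj
    have hmn : p1.length ≠ p2.length := by
      intro he
      rw [he, par2] at par1
      rw [fin2_neq hcc] at par1
      tauto
    have t1 : (p1.length : ℕ∞) ≤ (p2.length : ℕ∞) + 1 := by
      rw [hp1, hp2]
      calc H.edist h₁ b ≤ H.edist h₁ h₂ + H.edist h₂ b := SimpleGraph.edist_triangle
        _ = H.edist h₂ b + 1 := by rw [hH12]; ring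
    have t2 : (p2.length : ℕ∞) ≤ (p1.length : ℕ∞) + 1 := by
      rw [hp1, hp2]
      calc H.edist h₂ b ≤ H.edist h₂ h₁ + H.edist h₁ b := SimpleGraph.edist_triangle
        _ = H.edist h₁ b + 1 := by rw [SimpleGraph.edist_comm (u := h₂), hH12]; ring
    have t1' : p1.length ≤ p2.length + 1 := by exact_mod_cast t1
    have t2' : p2.length ≤ p1.length + 1 := by exact_mod_cast t2
    have hd : p1.length = p2.length + 1 ∨ p2.length = p1.length + 1 := by omega
    rcases hd with h | h
    · left
      rw [← hp1, ← hp2, h]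
      push_cast
      ring
    · right
      rw [← hp2, ← hp1, h]
      push_cast
      ring


/-- The canonical map from `W` to the vertex set of the glued graph. -/
def glueMapH {V W : Type*} [DecidableEq W] (g₁ g₂ : V) (h₁ h₂ : W) :
    W → V ⊕ {w : W // w ≠ h₁ ∧ w ≠ h₂} :=
  fun w => if hw1 : w = h₁ then Sum.inl g₁ else if hw2 : w = h₂ then Sum.inl g₂
    else Sum.inr ⟨w, hw1, hw2⟩


section Glue

set_option linter.unusedSectionVars false

variable {V W : Type*} [DecidableEq W] {G : SimpleGraph V} {g₁ g₂ : V}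
  {H : SimpleGraph W} {h₁ h₂ : W}

local notation "X" => twoPointGlue G g₁ g₂ H h₁ h₂
local notation "W'" => {w : W // w ≠ h₁ ∧ w ≠ h₂}

lemma glue_adj_inl_inl (hGadj : G.Adj g₁ g₂) {a b : V} :
    (X).Adj (Sum.inl a) (Sum.inl b) ↔ G.Adj a b := by
  simp only [twoPointGlue, SimpleGraph.fromRel_adj, ne_eq, Sum.inl.injEq]
  constructor
  · rintro ⟨hne, (h | ⟨rfl, rfl, -⟩) | (h | ⟨rfl, rfl, -⟩)⟩
    · exact h
    · exact hGadj
    · exact h.symm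
    · exact hGadj.symm
  · intro h
    exact ⟨h.ne, Or.inl (Or.inl h)⟩

lemma glue_adj_inl_inr {a : V} {b : W'} :
    (X).Adj (Sum.inl a) (Sum.inr b) ↔ (a = g₁ ∧ H.Adj h₁ b.1) ∨ (a = g₂ ∧ H.Adj h₂ b.1) := by
  simp only [twoPointGlue, SimpleGraph.fromRel_adj, ne_eq]
  constructor
  · rintro ⟨hne, h | h⟩
    · exact h
    · exact h.elim
  · intro h
    exact ⟨by simp, Or.inl h⟩

lemma glue_adj_inr_inr {b b' : W'} :
    (X).Adj (Sum.inr b) (Sum.inr b') ↔ H.Adj b.1 b'.1 := by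
  simp only [twoPointGlue, SimpleGraph.fromRel_adj, ne_eq, Sum.inr.injEq]
  constructor
  · rintro ⟨hne, h | h⟩
    · exact h
    · exact h.symm
  · intro h
    exact ⟨fun he => h.ne (congrArg Subtype.val he), Or.inl h⟩

lemma glueMapH_h₁ : glueMapH (W := W) g₁ g₂ h₁ h₂ h₁ = Sum.inl g₁ := by
  simp [glueMapH]

lemma glueMapH_h₂ (hne : h₂ ≠ h₁) : glueMapH (W := W) g₁ g₂ h₁ h₂ h₂ = Sum.inl g₂ := by
  simp [glueMapH, hne]

lemma glueMapH_other {w : W} (hw1 : w ≠ h₁) (hw2 : w ≠ h₂) :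
    glueMapH (W := W) g₁ g₂ h₁ h₂ w = Sum.inr ⟨w, hw1, hw2⟩ := by
  simp [glueMapH, hw1, hw2]

/-- The embedding of `G` into the glued graph. -/
def glueHomG (hGadj : G.Adj g₁ g₂) : G →g (X) where
  toFun := Sum.inl
  map_rel' := fun h => (glue_adj_inl_inl hGadj).mpr h

/-- `glueMapH` is a graph homomorphism. -/
def glueHomH (hGadj : G.Adj g₁ g₂) : H →g (X) where
  toFun := glueMapH g₁ g₂ h₁ h₂
  map_rel' := by
    intro a b hab
    rcases eq_or_ne a h₁ with ha1 | ha1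
    · rw [ha1] at hab ⊢
      rw [glueMapH_h₁]
      rcases eq_or_ne b h₂ with hb2 | hb2
      · rw [hb2] at hab ⊢
        rw [glueMapH_h₂ hab.ne']
        exact (glue_adj_inl_inl hGadj).mpr hGadj
      · rw [glueMapH_other hab.ne' hb2]
        exact glue_adj_inl_inr.mpr (Or.inl ⟨rfl, hab⟩)
    · rcases eq_or_ne a h₂ with ha2 | ha2
      · rw [ha2] at hab ⊢
        rw [glueMapH_h₂ (ha2 ▸ ha1)]
        rcases eq_or_ne b h₁ with hb1 | hb1
        · rw [hb1] at hab ⊢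
          rw [glueMapH_h₁]
          exact ((glue_adj_inl_inl hGadj).mpr hGadj).symm
        · rw [glueMapH_other hb1 hab.ne']
          exact glue_adj_inl_inr.mpr (Or.inr ⟨rfl, hab⟩)
      · rw [glueMapH_other ha1 ha2]
        rcases eq_or_ne b h₁ with hb1 | hb1
        · rw [hb1] at hab ⊢
          rw [glueMapH_h₁]
          exact (glue_adj_inl_inr.mpr (Or.inl ⟨rfl, hab.symm⟩)).symm
        · rcases eq_or_ne b h₂ with hb2 | hb2
          · rw [hb2] at hab ⊢
            rw [glueMapH_h₂ (hb2 ▸ hb1)]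
            exact (glue_adj_inl_inr.mpr (Or.inr ⟨rfl, hab.symm⟩)).symm
          · rw [glueMapH_other hb1 hb2]
            exact glue_adj_inr_inr.mpr hab

/-- Homomorphisms do not increase graph distance. -/
lemma edist_le_of_hom {V₁ V₂ : Type*} {G₁ : SimpleGraph V₁} {G₂ : SimpleGraph V₂}
    (f : G₁ →g G₂) (u v : V₁) : G₂.edist (f u) (f v) ≤ G₁.edist u v := by
  rcases eq_or_ne (G₁.edist u v) ⊤ with h | h
  · simp [h]
  · obtain ⟨p, hp⟩ := SimpleGraph.exists_walk_of_edist_ne_top h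
    calc G₂.edist (f u) (f v) ≤ (p.map f).length := SimpleGraph.edist_le _
      _ = (p.length : ℕ∞) := by rw [SimpleGraph.Walk.length_map]
      _ = G₁.edist u v := by rw [hp]

lemma glue_edist_le_G (hGadj : G.Adj g₁ g₂) (a a' : V) :
    (X).edist (Sum.inl a) (Sum.inl a') ≤ G.edist a a' :=
  edist_le_of_hom (glueHomG hGadj) a a'

lemma glue_edist_le_H (hGadj : G.Adj g₁ g₂) (b b' : W) :
    (X).edist (glueMapH g₁ g₂ h₁ h₂ b) (glueMapH g₁ g₂ h₁ h₂ b') ≤ H.edist b b' :=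
  edist_le_of_hom (glueHomH hGadj) b b'


open SimpleGraph Sum

private lemma enat_aux1 {a b c : ℕ∞} (h : a ≤ b + 1) : a + c ≤ (b + c) + 1 := by
  calc a + c ≤ (b + 1) + c := by gcongr
    _ = (b + c) + 1 := by ring

variable (G g₁ g₂ H h₁ h₂) in
/-- Lower-bound potential towards a vertex of the `H` part. -/
noncomputable def FH (t : W) : V ⊕ W' → ℕ∞
  | Sum.inl a => min (G.edist a g₁ + H.edist h₁ t) (G.edist a g₂ + H.edist h₂ t)
  | Sum.inr c => H.edist c.1 t

variable (G g₁ g₂ H h₁ h₂) in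
/-- Lower-bound potential towards a vertex of the `G` part. -/
noncomputable def FG (t : V) : V ⊕ W' → ℕ∞
  | Sum.inl a => G.edist a t
  | Sum.inr c => min (H.edist c.1 h₁ + G.edist g₁ t) (H.edist c.1 h₂ + G.edist g₂ t)

lemma FH_step (hGadj : G.Adj g₁ g₂) (hHadj : H.Adj h₁ h₂) (t : W) {x y : V ⊕ W'}
    (hxy : (X).Adj x y) : FH G g₁ g₂ H h₁ h₂ t x ≤ FH G g₁ g₂ H h₁ h₂ t y + 1 := by
  have hG12 : G.edist g₁ g₂ = 1 := SimpleGraph.edist_eq_one_iff_adj.mpr hGadj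
  have hH12 : H.edist h₁ h₂ = 1 := SimpleGraph.edist_eq_one_iff_adj.mpr hHadj
  rcases x with a | c <;> rcases y with a' | c'
  · -- inl, inl
    have hd : G.edist a a' = 1 :=
      SimpleGraph.edist_eq_one_iff_adj.mpr ((glue_adj_inl_inl hGadj).mp hxy)
    have t1 : G.edist a g₁ ≤ G.edist a' g₁ + 1 := by
      calc G.edist a g₁ ≤ G.edist a a' + G.edist a' g₁ := SimpleGraph.edist_triangle
        _ = G.edist a' g₁ + 1 := by rw [hd]; ring
    have t2 : G.edist a g₂ ≤ G.edist a' g₂ + 1 := by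
      calc G.edist a g₂ ≤ G.edist a a' + G.edist a' g₂ := SimpleGraph.edist_triangle
        _ = G.edist a' g₂ + 1 := by rw [hd]; ring
    simp only [FH]
    rw [← min_add_add_right]
    exact min_le_min (by calc G.edist a g₁ + H.edist h₁ t
          ≤ (G.edist a' g₁ + 1) + H.edist h₁ t := by gcongr
        _ = (G.edist a' g₁ + H.edist h₁ t) + 1 := by ring)
      (by calc G.edist a g₂ + H.edist h₂ t
          ≤ (G.edist a' g₂ + 1) + H.edist h₂ t := by gcongr
        _ = (G.edist a' g₂ + H.edist h₂ t) + 1 := by ring)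
  · -- inl, inr
    obtain ⟨ha, hadj⟩ | ⟨ha, hadj⟩ := (glue_adj_inl_inr).mp hxy
    · have hd : H.edist h₁ c'.1 = 1 := SimpleGraph.edist_eq_one_iff_adj.mpr hadj
      simp only [FH]
      refine min_le_of_left_le ?_
      rw [ha, SimpleGraph.edist_self, zero_add]
      calc H.edist h₁ t ≤ H.edist h₁ c'.1 + H.edist c'.1 t := SimpleGraph.edist_triangle
        _ = H.edist c'.1 t + 1 := by rw [hd]; ring
    · have hd : H.edist h₂ c'.1 = 1 := SimpleGraph.edist_eq_one_iff_adj.mpr hadj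
      simp only [FH]
      refine min_le_of_right_le ?_
      rw [ha, SimpleGraph.edist_self, zero_add]
      calc H.edist h₂ t ≤ H.edist h₂ c'.1 + H.edist c'.1 t := SimpleGraph.edist_triangle
        _ = H.edist c'.1 t + 1 := by rw [hd]; ring
  · -- inr, inl
    obtain ⟨ha, hadj⟩ | ⟨ha, hadj⟩ := (glue_adj_inl_inr).mp hxy.symm
    · have hd : H.edist c.1 h₁ = 1 := SimpleGraph.edist_eq_one_iff_adj.mpr hadj.symm
      simp only [FH]
      rw [ha, ← min_add_add_right]
      refine le_min ?_ ?_
      · rw [SimpleGraph.edist_self, zero_add]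
        calc H.edist c.1 t ≤ H.edist c.1 h₁ + H.edist h₁ t := SimpleGraph.edist_triangle
          _ = H.edist h₁ t + 1 := by rw [hd]; ring
      · calc H.edist c.1 t ≤ H.edist c.1 h₁ + H.edist h₁ t := SimpleGraph.edist_triangle
          _ ≤ H.edist c.1 h₁ + (H.edist h₁ h₂ + H.edist h₂ t) := by
              gcongr
              exact SimpleGraph.edist_triangle
          _ = (G.edist g₁ g₂ + H.edist h₂ t) + 1 := by rw [hd, hH12, hG12]; ring
    · have hd : H.edist c.1 h₂ = 1 := SimpleGraph.edist_eq_one_iff_adj.mpr hadj.symm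
      simp only [FH]
      rw [ha, ← min_add_add_right]
      refine le_min ?_ ?_
      · calc H.edist c.1 t ≤ H.edist c.1 h₂ + H.edist h₂ t := SimpleGraph.edist_triangle
          _ ≤ H.edist c.1 h₂ + (H.edist h₂ h₁ + H.edist h₁ t) := by
              gcongr
              exact SimpleGraph.edist_triangle
          _ = (G.edist g₂ g₁ + H.edist h₁ t) + 1 := by
              rw [hd, SimpleGraph.edist_comm (u := h₂), hH12,
                SimpleGraph.edist_comm (u := g₂), hG12]
              ring
      · rw [SimpleGraph.edist_self, zero_add]
        calc H.edist c.1 t ≤ H.edist c.1 h₂ + H.edist h₂ t := SimpleGraph.edist_triangle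
          _ = H.edist h₂ t + 1 := by rw [hd]; ring
  · -- inr, inr
    have hd : H.edist c.1 c'.1 = 1 :=
      SimpleGraph.edist_eq_one_iff_adj.mpr ((glue_adj_inr_inr).mp hxy)
    simp only [FH]
    calc H.edist c.1 t ≤ H.edist c.1 c'.1 + H.edist c'.1 t := SimpleGraph.edist_triangle
      _ = H.edist c'.1 t + 1 := by rw [hd]; ring

lemma FG_step (hGadj : G.Adj g₁ g₂) (hHadj : H.Adj h₁ h₂) (t : V) {x y : V ⊕ W'}
    (hxy : (X).Adj x y) : FG G g₁ g₂ H h₁ h₂ t x ≤ FG G g₁ g₂ H h₁ h₂ t y + 1 := by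
  have hG12 : G.edist g₁ g₂ = 1 := SimpleGraph.edist_eq_one_iff_adj.mpr hGadj
  have hH12 : H.edist h₁ h₂ = 1 := SimpleGraph.edist_eq_one_iff_adj.mpr hHadj
  rcases x with a | c <;> rcases y with a' | c'
  · -- inl, inl
    have hd : G.edist a a' = 1 :=
      SimpleGraph.edist_eq_one_iff_adj.mpr ((glue_adj_inl_inl hGadj).mp hxy)
    simp only [FG]
    calc G.edist a t ≤ G.edist a a' + G.edist a' t := SimpleGraph.edist_triangle
      _ = G.edist a' t + 1 := by rw [hd]; ring
  · -- inl, inr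
    obtain ⟨ha, hadj⟩ | ⟨ha, hadj⟩ := (glue_adj_inl_inr).mp hxy
    · simp only [FG]
      rw [ha, ← min_add_add_right]
      refine le_min (le_add_right le_add_self) ?_
      calc G.edist g₁ t ≤ G.edist g₁ g₂ + G.edist g₂ t := SimpleGraph.edist_triangle
        _ = G.edist g₂ t + 1 := by rw [hG12]; ring
        _ ≤ (H.edist c'.1 h₂ + G.edist g₂ t) + 1 := by gcongr; exact le_add_self
    · simp only [FG]
      rw [ha, ← min_add_add_right]
      refine le_min ?_ (le_add_right le_add_self)
      calc G.edist g₂ t ≤ G.edist g₂ g₁ + G.edist g₁ t := SimpleGraph.edist_triangle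
        _ = G.edist g₁ t + 1 := by rw [SimpleGraph.edist_comm (u := g₂), hG12]; ring
        _ ≤ (H.edist c'.1 h₁ + G.edist g₁ t) + 1 := by gcongr; exact le_add_self
  · -- inr, inl
    obtain ⟨ha, hadj⟩ | ⟨ha, hadj⟩ := (glue_adj_inl_inr).mp hxy.symm
    · have hd : H.edist c.1 h₁ = 1 := SimpleGraph.edist_eq_one_iff_adj.mpr hadj.symm
      simp only [FG]
      rw [ha]
      refine min_le_of_left_le ?_
      rw [hd]
      calc 1 + G.edist g₁ t = G.edist g₁ t + 1 := by ring
        _ ≤ G.edist g₁ t + 1 := le_rfl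
    · have hd : H.edist c.1 h₂ = 1 := SimpleGraph.edist_eq_one_iff_adj.mpr hadj.symm
      simp only [FG]
      rw [ha]
      refine min_le_of_right_le ?_
      rw [hd]
      calc 1 + G.edist g₂ t = G.edist g₂ t + 1 := by ring
        _ ≤ G.edist g₂ t + 1 := le_rfl
  · -- inr, inr
    have hd : H.edist c.1 c'.1 = 1 :=
      SimpleGraph.edist_eq_one_iff_adj.mpr ((glue_adj_inr_inr).mp hxy)
    have t1 : H.edist c.1 h₁ ≤ H.edist c'.1 h₁ + 1 := by
      calc H.edist c.1 h₁ ≤ H.edist c.1 c'.1 + H.edist c'.1 h₁ := SimpleGraph.edist_triangle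
        _ = H.edist c'.1 h₁ + 1 := by rw [hd]; ring
    have t2 : H.edist c.1 h₂ ≤ H.edist c'.1 h₂ + 1 := by
      calc H.edist c.1 h₂ ≤ H.edist c.1 c'.1 + H.edist c'.1 h₂ := SimpleGraph.edist_triangle
        _ = H.edist c'.1 h₂ + 1 := by rw [hd]; ring
    simp only [FG]
    rw [← min_add_add_right]
    exact min_le_min (enat_aux1 t1) (enat_aux1 t2)

lemma FH_le_walk (hGadj : G.Adj g₁ g₂) (hHadj : H.Adj h₁ h₂) (t : W') {x y : V ⊕ W'}
    (p : (X).Walk x y) (hy : y = Sum.inr t) :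
    FH G g₁ g₂ H h₁ h₂ t.1 x ≤ p.length := by
  induction p with
  | nil =>
    subst hy
    simp [FH, SimpleGraph.edist_self]
  | cons huv p ih =>
    calc FH G g₁ g₂ H h₁ h₂ t.1 _ ≤ FH G g₁ g₂ H h₁ h₂ t.1 _ + 1 :=
          FH_step hGadj hHadj t.1 huv
      _ ≤ (p.length : ℕ∞) + 1 := by gcongr; exact ih hy
      _ = (((p.cons huv).length : ℕ) : ℕ∞) := by
          rw [SimpleGraph.Walk.length_cons]; push_cast; ring

lemma FG_le_walk (hGadj : G.Adj g₁ g₂) (hHadj : H.Adj h₁ h₂) (t : V) {x y : V ⊕ W'}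
    (p : (X).Walk x y) (hy : y = Sum.inl t) :
    FG G g₁ g₂ H h₁ h₂ t x ≤ p.length := by
  induction p with
  | nil =>
    subst hy
    simp [FG, SimpleGraph.edist_self]
  | cons huv p ih =>
    calc FG G g₁ g₂ H h₁ h₂ t _ ≤ FG G g₁ g₂ H h₁ h₂ t _ + 1 :=
          FG_step hGadj hHadj t huv
      _ ≤ (p.length : ℕ∞) + 1 := by gcongr; exact ih hy
      _ = (((p.cons huv).length : ℕ) : ℕ∞) := by
          rw [SimpleGraph.Walk.length_cons]; push_cast; ring

lemma FH_le_edist (hGadj : G.Adj g₁ g₂) (hHadj : H.Adj h₁ h₂) (t : W') (x : V ⊕ W') :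
    FH G g₁ g₂ H h₁ h₂ t.1 x ≤ (X).edist x (Sum.inr t) := by
  rcases eq_or_ne ((X).edist x (Sum.inr t)) ⊤ with h | h
  · simp [h]
  · obtain ⟨p, hp⟩ := SimpleGraph.exists_walk_of_edist_ne_top h
    rw [← hp]
    exact FH_le_walk hGadj hHadj t p rfl

lemma FG_le_edist (hGadj : G.Adj g₁ g₂) (hHadj : H.Adj h₁ h₂) (t : V) (x : V ⊕ W') :
    FG G g₁ g₂ H h₁ h₂ t x ≤ (X).edist x (Sum.inl t) := by
  rcases eq_or_ne ((X).edist x (Sum.inl t)) ⊤ with h | h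
  · simp [h]
  · obtain ⟨p, hp⟩ := SimpleGraph.exists_walk_of_edist_ne_top h
    rw [← hp]
    exact FG_le_walk hGadj hHadj t p rfl

lemma glue_edist_inl_inl (hGadj : G.Adj g₁ g₂) (hHadj : H.Adj h₁ h₂) (a a' : V) :
    (X).edist (Sum.inl a) (Sum.inl a') = G.edist a a' :=
  le_antisymm (glue_edist_le_G hGadj a a') (FG_le_edist hGadj hHadj a' (Sum.inl a))

lemma glue_edist_inr_inr (hGadj : G.Adj g₁ g₂) (hHadj : H.Adj h₁ h₂) (b b' : W') :
    (X).edist (Sum.inr b) (Sum.inr b') = H.edist b.1 b'.1 := by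
  refine le_antisymm ?_ (FH_le_edist hGadj hHadj b' (Sum.inr b))
  have h := glue_edist_le_H (H := H) (h₁ := h₁) (h₂ := h₂) hGadj b.1 b'.1
  rwa [glueMapH_other b.2.1 b.2.2, glueMapH_other b'.2.1 b'.2.2] at h

lemma glue_edist_inl_inr (hGadj : G.Adj g₁ g₂) (hHadj : H.Adj h₁ h₂) (a : V) (b : W') :
    (X).edist (Sum.inl a) (Sum.inr b) =
      min (G.edist a g₁ + H.edist h₁ b.1) (G.edist a g₂ + H.edist h₂ b.1) := by
  refine le_antisymm ?_ (FH_le_edist hGadj hHadj b (Sum.inl a))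
  have e1 : (X).edist (Sum.inl g₁) (Sum.inr b) ≤ H.edist h₁ b.1 := by
    have h := glue_edist_le_H (H := H) (h₁ := h₁) (h₂ := h₂) hGadj h₁ b.1
    rwa [glueMapH_h₁, glueMapH_other b.2.1 b.2.2] at h
  have e2 : (X).edist (Sum.inl g₂) (Sum.inr b) ≤ H.edist h₂ b.1 := by
    have h := glue_edist_le_H (H := H) (h₁ := h₁) (h₂ := h₂) hGadj h₂ b.1
    rwa [glueMapH_h₂ hHadj.ne', glueMapH_other b.2.1 b.2.2] at h
  refine le_min ?_ ?_
  · calc (X).edist (Sum.inl a) (Sum.inr b)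
        ≤ (X).edist (Sum.inl a) (Sum.inl g₁) + (X).edist (Sum.inl g₁) (Sum.inr b) :=
          SimpleGraph.edist_triangle
      _ ≤ G.edist a g₁ + H.edist h₁ b.1 := add_le_add (glue_edist_le_G hGadj a g₁) e1
  · calc (X).edist (Sum.inl a) (Sum.inr b)
        ≤ (X).edist (Sum.inl a) (Sum.inl g₂) + (X).edist (Sum.inl g₂) (Sum.inr b) :=
          SimpleGraph.edist_triangle
      _ ≤ G.edist a g₂ + H.edist h₂ b.1 := add_le_add (glue_edist_le_G hGadj a g₂) e2

end Glue

/-- If `X` is obtained by identifying an edge of a graph `G` with an edge of a bipartite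
graph `H`, then `|X| = |G| + |H| - 2/(1+q)`. -/
theorem magnitude_glue_edge_bipartite
    {V W : Type*} [Fintype V] [DecidableEq V] [Fintype W] [DecidableEq W]
    (G : SimpleGraph V) (g₁ g₂ : V) (H : SimpleGraph W) (h₁ h₂ : W)
    (hGadj : G.Adj g₁ g₂) (hHadj : H.Adj h₁ h₂) (hbip : H.Colorable 2) :
    magnitude (twoPointGlue G g₁ g₂ H h₁ h₂) =
      magnitude G + magnitude H - 2 / (1 + RatFunc.X) := by

  obtain ⟨c⟩ := hbip
  set u : RatFunc ℚ := (1 + RatFunc.X)⁻¹ with hu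
  have hu1 : (1 + RatFunc.X) * u = 1 := by
    rw [hu]; exact mul_inv_cancel₀ one_add_X_ne_zero
  have hG12 : G.edist g₁ g₂ = 1 := SimpleGraph.edist_eq_one_iff_adj.mpr hGadj
  have hH12 : H.edist h₁ h₂ = 1 := SimpleGraph.edist_eq_one_iff_adj.mpr hHadj
  have hgne : g₁ ≠ g₂ := hGadj.ne
  have hhne : h₁ ≠ h₂ := hHadj.ne
  have hG21 : G.edist g₂ g₁ = 1 := by rw [SimpleGraph.edist_comm (u := g₂)]; exact hG12
  have tri_g1 : ∀ a : V, G.edist a g₁ ≤ G.edist a g₂ + 1 := fun a => by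
    calc G.edist a g₁ ≤ G.edist a g₂ + G.edist g₂ g₁ := SimpleGraph.edist_triangle
      _ = G.edist a g₂ + 1 := by rw [SimpleGraph.edist_comm (u := g₂), hG12]
  have tri_g2 : ∀ a : V, G.edist a g₂ ≤ G.edist a g₁ + 1 := fun a => by
    calc G.edist a g₂ ≤ G.edist a g₁ + G.edist g₁ g₂ := SimpleGraph.edist_triangle
      _ = G.edist a g₁ + 1 := by rw [hG12]
  set wG : V → RatFunc ℚ := weighting G with hwG
  set wH : W → RatFunc ℚ := weighting H with hwH
  have specG : ∀ x, ∑ y, qExp (G.edist x y) * wG y = 1 := by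
    intro x; rw [hwG]; exact weighting_spec G x
  have specH : ∀ x, ∑ y, qExp (H.edist x y) * wH y = 1 := by
    intro x; rw [hwH]; exact weighting_spec H x
  have flipG : ∀ t : V, ∑ a', qExp (G.edist a' t) * wG a' = 1 := fun t =>
    (Finset.sum_congr rfl fun a' _ => by rw [SimpleGraph.edist_comm]).trans (specG t)
  set pb : W → Prop := fun b => H.edist h₁ b = H.edist h₂ b + 1 with hpbdef
  have pbDec : DecidablePred pb := fun b => by rw [hpbdef]; infer_instance
  have dich : ∀ b, pb b ∨ H.edist h₂ b = H.edist h₁ b + 1 := fun b =>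
    bip_dichotomy c hHadj b
  set s₁ : RatFunc ℚ :=
    ∑ b ∈ Finset.univ.filter (fun b => ¬ pb b), qExp (H.edist h₁ b) * wH b with hs₁def
  set s₂ : RatFunc ℚ :=
    ∑ b ∈ Finset.univ.filter pb, qExp (H.edist h₂ b) * wH b with hs₂def
  have eq1 : s₁ + RatFunc.X * s₂ = 1 := by
    have hsplit := Finset.sum_filter_add_sum_filter_not Finset.univ pb
      (fun b => qExp (H.edist h₁ b) * wH b)
    rw [specH h₁] at hsplit
    have hA : ∑ b ∈ Finset.univ.filter pb, qExp (H.edist h₁ b) * wH b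
        = RatFunc.X * s₂ := by
      rw [hs₂def, Finset.mul_sum]
      refine Finset.sum_congr rfl fun b hb => ?_
      rw [show H.edist h₁ b = H.edist h₂ b + 1 from (Finset.mem_filter.mp hb).2,
        qExp_add_one]
      ring
    rw [hA] at hsplit
    rw [hs₁def]
    linear_combination hsplit
  have eq2 : RatFunc.X * s₁ + s₂ = 1 := by
    have hsplit := Finset.sum_filter_add_sum_filter_not Finset.univ pb
      (fun b => qExp (H.edist h₂ b) * wH b)
    rw [specH h₂] at hsplit
    have hA : ∑ b ∈ Finset.univ.filter (fun b => ¬ pb b), qExp (H.edist h₂ b) * wH b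
        = RatFunc.X * s₁ := by
      rw [hs₁def, Finset.mul_sum]
      refine Finset.sum_congr rfl fun b hb => ?_
      rw [show H.edist h₂ b = H.edist h₁ b + 1 from
        (dich b).resolve_left (Finset.mem_filter.mp hb).2, qExp_add_one]
      ring
    rw [hA] at hsplit
    rw [hs₂def]
    linear_combination hsplit
  have hs12 : s₁ = s₂ := by
    have h0 : (s₁ - s₂) * (1 - RatFunc.X) = 0 := by linear_combination eq1 - eq2
    rcases mul_eq_zero.mp h0 with h | h
    · exact sub_eq_zero.mp h
    · exact absurd h one_sub_X_ne_zero
  have hs1u : s₁ = u := by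
    have hmul : s₁ * (1 + RatFunc.X) = 1 := by
      linear_combination eq1 + RatFunc.X * hs12
    rw [hu, inv_eq_one_div]
    exact eq_one_div_of_mul_eq_one_right (by linear_combination hmul)
  have hs2u : s₂ = u := by rw [← hs12]; exact hs1u
  -- the candidate weighting on the glued graph
  set v : V ⊕ {w : W // w ≠ h₁ ∧ w ≠ h₂} → RatFunc ℚ := Sum.elim
    (fun a => wG a + (if a = g₁ then wH h₁ - u else 0) + (if a = g₂ then wH h₂ - u else 0))
    (fun b => wH b.1) with hv
  -- the minimum at the special vertices
  have Mh1 : ∀ a : V,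
      min (G.edist a g₁ + H.edist h₁ h₁) (G.edist a g₂ + H.edist h₂ h₁) = G.edist a g₁ := by
    intro a
    rw [SimpleGraph.edist_self, add_zero, SimpleGraph.edist_comm (u := h₂), hH12]
    exact min_eq_left (tri_g1 a)
  have Mh2 : ∀ a : V,
      min (G.edist a g₁ + H.edist h₁ h₂) (G.edist a g₂ + H.edist h₂ h₂) = G.edist a g₂ := by
    intro a
    rw [SimpleGraph.edist_self, add_zero, hH12]
    exact min_eq_right (tri_g2 a)
  -- the key sum over all of W
  have keyA : ∀ a : V,
      ∑ w, qExp (min (G.edist a g₁ + H.edist h₁ w) (G.edist a g₂ + H.edist h₂ w)) * wH w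
        = (qExp (G.edist a g₁) + qExp (G.edist a g₂)) * u := by
    intro a
    rw [← Finset.sum_filter_add_sum_filter_not Finset.univ pb
      (fun w => qExp (min (G.edist a g₁ + H.edist h₁ w) (G.edist a g₂ + H.edist h₂ w)) * wH w)]
    have hA : ∑ w ∈ Finset.univ.filter pb,
        qExp (min (G.edist a g₁ + H.edist h₁ w) (G.edist a g₂ + H.edist h₂ w)) * wH w
        = qExp (G.edist a g₂) * s₂ := by
      rw [hs₂def, Finset.mul_sum]
      refine Finset.sum_congr rfl fun w hw => ?_
      rw [show H.edist h₁ w = H.edist h₂ w + 1 from (Finset.mem_filter.mp hw).2,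
        min_add_one_right (tri_g2 a), qExp_add]
      ring
    have hB : ∑ w ∈ Finset.univ.filter (fun w => ¬ pb w),
        qExp (min (G.edist a g₁ + H.edist h₁ w) (G.edist a g₂ + H.edist h₂ w)) * wH w
        = qExp (G.edist a g₁) * s₁ := by
      rw [hs₁def, Finset.mul_sum]
      refine Finset.sum_congr rfl fun w hw => ?_
      rw [show H.edist h₂ w = H.edist h₁ w + 1 from
        (dich w).resolve_left (Finset.mem_filter.mp hw).2, min_add_one_left (tri_g1 a), qExp_add]
      ring
    rw [hA, hB, hs1u, hs2u]
    ring
  -- row equation at a vertex of the G part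
  have row_inl : ∀ a : V,
      ∑ y, qExp ((twoPointGlue G g₁ g₂ H h₁ h₂).edist (Sum.inl a) y) * v y = 1 := by
    intro a
    rw [Fintype.sum_sum_type]
    have e1 : ∑ a' : V,
        qExp ((twoPointGlue G g₁ g₂ H h₁ h₂).edist (Sum.inl a) (Sum.inl a')) * v (Sum.inl a')
        = 1 + qExp (G.edist a g₁) * (wH h₁ - u) + qExp (G.edist a g₂) * (wH h₂ - u) := by
      have step : ∀ a' : V,
          qExp ((twoPointGlue G g₁ g₂ H h₁ h₂).edist (Sum.inl a) (Sum.inl a')) * v (Sum.inl a')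
          = qExp (G.edist a a') * wG a'
            + (if a' = g₁ then qExp (G.edist a a') * (wH h₁ - u) else 0)
            + (if a' = g₂ then qExp (G.edist a a') * (wH h₂ - u) else 0) := by
        intro a'
        rw [glue_edist_inl_inl hGadj hHadj, hv]
        simp only [Sum.elim_inl]
        split_ifs <;> ring
      rw [Finset.sum_congr rfl fun a' _ => step a', Finset.sum_add_distrib,
        Finset.sum_add_distrib, Finset.sum_ite_eq', Finset.sum_ite_eq',
        if_pos (Finset.mem_univ g₁), if_pos (Finset.mem_univ g₂), specG a]
    have e2 : ∑ b : {w : W // w ≠ h₁ ∧ w ≠ h₂},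
        qExp ((twoPointGlue G g₁ g₂ H h₁ h₂).edist (Sum.inl a) (Sum.inr b)) * v (Sum.inr b)
        = (qExp (G.edist a g₁) + qExp (G.edist a g₂)) * u
          - qExp (G.edist a g₁) * wH h₁ - qExp (G.edist a g₂) * wH h₂ := by
      have step : ∀ b : {w : W // w ≠ h₁ ∧ w ≠ h₂},
          qExp ((twoPointGlue G g₁ g₂ H h₁ h₂).edist (Sum.inl a) (Sum.inr b)) * v (Sum.inr b)
          = qExp (min (G.edist a g₁ + H.edist h₁ b.1) (G.edist a g₂ + H.edist h₂ b.1))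
            * wH b.1 := by
        intro b
        rw [glue_edist_inl_inr hGadj hHadj, hv]
        simp only [Sum.elim_inr]
      rw [Finset.sum_congr rfl fun b _ => step b,
        sum_subtype_compl h₁ h₂ hhne
          (fun w => qExp (min (G.edist a g₁ + H.edist h₁ w) (G.edist a g₂ + H.edist h₂ w)) * wH w),
        keyA a, Mh1 a, Mh2 a]
    rw [e1, e2]
    ring
  -- row equation at a vertex of the H part
  have row_inr : ∀ b : {w : W // w ≠ h₁ ∧ w ≠ h₂},
      ∑ y, qExp ((twoPointGlue G g₁ g₂ H h₁ h₂).edist (Sum.inr b) y) * v y = 1 := by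
    intro b
    rw [Fintype.sum_sum_type]
    have e2 : ∑ b' : {w : W // w ≠ h₁ ∧ w ≠ h₂},
        qExp ((twoPointGlue G g₁ g₂ H h₁ h₂).edist (Sum.inr b) (Sum.inr b')) * v (Sum.inr b')
        = 1 - qExp (H.edist h₁ b.1) * wH h₁ - qExp (H.edist h₂ b.1) * wH h₂ := by
      have step : ∀ b' : {w : W // w ≠ h₁ ∧ w ≠ h₂},
          qExp ((twoPointGlue G g₁ g₂ H h₁ h₂).edist (Sum.inr b) (Sum.inr b')) * v (Sum.inr b')
          = qExp (H.edist b.1 b'.1) * wH b'.1 := by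
        intro b'
        rw [glue_edist_inr_inr hGadj hHadj, hv]
        simp only [Sum.elim_inr]
      rw [Finset.sum_congr rfl fun b' _ => step b',
        sum_subtype_compl h₁ h₂ hhne (fun w => qExp (H.edist b.1 w) * wH w),
        specH b.1, SimpleGraph.edist_comm (u := (b.1 : W)) (v := h₁),
        SimpleGraph.edist_comm (u := (b.1 : W)) (v := h₂)]
    rcases dich b.1 with hcase | hcase
    · have e1 : ∑ a : V,
          qExp ((twoPointGlue G g₁ g₂ H h₁ h₂).edist (Sum.inr b) (Sum.inl a)) * v (Sum.inl a)
          = qExp (H.edist h₂ b.1) * 1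
            + qExp (H.edist h₂ b.1) * (RatFunc.X * (wH h₁ - u))
            + qExp (H.edist h₂ b.1) * (wH h₂ - u) := by
        have step : ∀ a : V,
            qExp ((twoPointGlue G g₁ g₂ H h₁ h₂).edist (Sum.inr b) (Sum.inl a)) * v (Sum.inl a)
            = qExp (H.edist h₂ b.1) * (qExp (G.edist a g₂) * wG a)
              + (if a = g₁ then qExp (H.edist h₂ b.1) * (RatFunc.X * (wH h₁ - u)) else 0)
              + (if a = g₂ then qExp (H.edist h₂ b.1) * (wH h₂ - u) else 0) := by
          intro a
          rw [SimpleGraph.edist_comm, glue_edist_inl_inr hGadj hHadj, hcase,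
            min_add_one_right (tri_g2 a), qExp_add, hv]
          simp only [Sum.elim_inl]
          rcases eq_or_ne a g₁ with ha1 | ha1
          · simp only [ha1, if_pos rfl, if_true, if_neg hgne, hG12, qExp_one]
            ring
          · rcases eq_or_ne a g₂ with ha2 | ha2
            · simp only [ha2, if_pos rfl, if_true, if_neg (Ne.symm hgne), SimpleGraph.edist_self,
                qExp_zero]
              ring
            · simp only [if_neg ha1, if_neg ha2]
              ring
        rw [Finset.sum_congr rfl fun a _ => step a, Finset.sum_add_distrib,
          Finset.sum_add_distrib, Finset.sum_ite_eq', Finset.sum_ite_eq',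
          if_pos (Finset.mem_univ g₁), if_pos (Finset.mem_univ g₂), ← Finset.mul_sum,
          flipG g₂]
      rw [e1, e2, hcase, qExp_add_one]
      linear_combination (-(qExp (H.edist h₂ b.1))) * hu1
    · have e1 : ∑ a : V,
          qExp ((twoPointGlue G g₁ g₂ H h₁ h₂).edist (Sum.inr b) (Sum.inl a)) * v (Sum.inl a)
          = qExp (H.edist h₁ b.1) * 1
            + qExp (H.edist h₁ b.1) * (wH h₁ - u)
            + qExp (H.edist h₁ b.1) * (RatFunc.X * (wH h₂ - u)) := by
        have step : ∀ a : V,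
            qExp ((twoPointGlue G g₁ g₂ H h₁ h₂).edist (Sum.inr b) (Sum.inl a)) * v (Sum.inl a)
            = qExp (H.edist h₁ b.1) * (qExp (G.edist a g₁) * wG a)
              + (if a = g₁ then qExp (H.edist h₁ b.1) * (wH h₁ - u) else 0)
              + (if a = g₂ then qExp (H.edist h₁ b.1) * (RatFunc.X * (wH h₂ - u)) else 0) := by
          intro a
          rw [SimpleGraph.edist_comm, glue_edist_inl_inr hGadj hHadj, hcase,
            min_add_one_left (tri_g1 a), qExp_add, hv]
          simp only [Sum.elim_inl]
          rcases eq_or_ne a g₁ with ha1 | ha1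
          · simp only [ha1, if_pos rfl, if_true, if_neg hgne, SimpleGraph.edist_self, qExp_zero]
            ring
          · rcases eq_or_ne a g₂ with ha2 | ha2
            · simp only [ha2, if_pos rfl, if_true, if_neg (Ne.symm hgne), hG21, qExp_one]
              ring
            · simp only [if_neg ha1, if_neg ha2]
              ring
        rw [Finset.sum_congr rfl fun a _ => step a, Finset.sum_add_distrib,
          Finset.sum_add_distrib, Finset.sum_ite_eq', Finset.sum_ite_eq',
          if_pos (Finset.mem_univ g₁), if_pos (Finset.mem_univ g₂), ← Finset.mul_sum,
          flipG g₁]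
      rw [e1, e2, hcase, qExp_add_one]
      linear_combination (-(qExp (H.edist h₁ b.1))) * hu1
  -- assemble
  have hmag := sum_eq_magnitude (twoPointGlue G g₁ g₂ H h₁ h₂) v (by
    intro x
    rcases x with a | b
    · exact row_inl a
    · exact row_inr b)
  rw [← hmag, Fintype.sum_sum_type]
  have p1 : ∑ a : V, v (Sum.inl a) = magnitude G + (wH h₁ - u) + (wH h₂ - u) := by
    have step : ∀ a : V, v (Sum.inl a)
        = wG a + (if a = g₁ then wH h₁ - u else 0) + (if a = g₂ then wH h₂ - u else 0) := by
      intro a; rw [hv]; simp only [Sum.elim_inl]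
    rw [Finset.sum_congr rfl fun a _ => step a, Finset.sum_add_distrib,
      Finset.sum_add_distrib, Finset.sum_ite_eq', Finset.sum_ite_eq',
      if_pos (Finset.mem_univ g₁), if_pos (Finset.mem_univ g₂),
      magnitude_eq_sum_weighting G, ← hwG]
  have p2 : ∑ b : {w : W // w ≠ h₁ ∧ w ≠ h₂}, v (Sum.inr b)
      = magnitude H - wH h₁ - wH h₂ := by
    have step : ∀ b : {w : W // w ≠ h₁ ∧ w ≠ h₂}, v (Sum.inr b) = wH b.1 := by
      intro b; rw [hv]; simp only [Sum.elim_inr]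
    rw [Finset.sum_congr rfl fun b _ => step b, sum_subtype_compl h₁ h₂ hhne wH,
      magnitude_eq_sum_weighting H, ← hwH]
  rw [p1, p2]
  have h2u : (2 : RatFunc ℚ) / (1 + RatFunc.X) = 2 * u := by
    rw [hu, div_eq_mul_inv]
  rw [h2u]
  ring
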